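/- arXiv:1307.6429 — 2 statements merged into one kernel-verified Lean document; each statement's English description precedes it below -/
import Mathlib

section
/- Let A ∈ ℬ ≤ Hom(V, V') and let W* be the limit of the second Wong sequence of (⟨A⟩, ℬ). Then there exists a corank(A)-singularity witness of ℬ if and only if W* ⊆ im(A). In that case A is of maximum rank in ℬ, and A⁻¹(W*) is a corank(ℬ)-singularity witness. -/
/-!
If `U` is a `corank A`-witness with `A ∈ ℬ`, the inequalities `dim A(U) ≤ dim ℬ(U)` and
`dim (ker A ⊓ U) ≤ dim ker A` are forced to be equalities, so `ker A ≤ U` and `ℬ(U) = A(U)`.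
Then `X = A(U) ≤ im A` is closed under `X ↦ ℬ(A⁻¹ X)`, and the Wong sequence stays below it.
Conversely, `W*` is a fixed point of `X ↦ ℬ(A⁻¹ X)`; when `W* ≤ im A`, rank–nullity gives
`dim A⁻¹(W*) = dim W* + corank A`, so `A⁻¹(W*)` is a `corank A`-witness. Finally any
`c`-witness `U` bounds the corank of every `B ∈ ℬ` from below by `c`, since
`dim U ≤ dim B(U) + dim (ker B ⊓ U) ≤ dim ℬ(U) + corank B`; hence `A` has maximum rank.
-/

open Submodule Module

variable {F V V' : Type*} [Field F] [AddCommGroup V] [Module F V]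
  [AddCommGroup V'] [Module F V']

/-- The image of a subspace `U` under a matrix space `A`: the span of all `a u`. -/
def msImage (A : Submodule F (V →ₗ[F] V')) (U : Submodule F V) : Submodule F V' :=
  Submodule.span F {x | ∃ a ∈ A, ∃ u ∈ U, a u = x}

def IsSingularityWitness (ℬ : Submodule F (V →ₗ[F] V')) (c : ℕ) (U : Submodule F V) : Prop :=
  finrank F (msImage ℬ U) + c ≤ finrank F U

lemma finrank_map_add_finrank_ker_inf [FiniteDimensional F V]
    (A : V →ₗ[F] V') (U : Submodule F V) :
    finrank F (U.map A) + finrank F (LinearMap.ker A ⊓ U : Submodule F V) = finrank F U := by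
  have h := LinearMap.finrank_range_add_finrank_ker (A.domRestrict U)
  rw [LinearMap.range_domRestrict, LinearMap.ker_domRestrict] at h
  have e := Submodule.equivMapOfInjective U.subtype U.injective_subtype
    (comap U.subtype (LinearMap.ker A))
  rw [Submodule.map_comap_subtype] at e
  rw [← h, e.finrank_eq, inf_comm]

lemma finrank_comap_eq_of_le_range [FiniteDimensional F V]
    {A : V →ₗ[F] V'} {X : Submodule F V'} (hX : X ≤ LinearMap.range A) :
    finrank F (X.comap A) = finrank F X + finrank F (LinearMap.ker A) := by
  have h := finrank_map_add_finrank_ker_inf A (X.comap A)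
  rwa [Submodule.map_comap_eq, inf_eq_right.mpr hX,
    inf_eq_left.mpr (LinearMap.ker_le_comap A), eq_comm] at h

section msImage

variable {ℬ : Submodule F (V →ₗ[F] V')}

lemma msImage_mono {U U' : Submodule F V} (h : U ≤ U') : msImage ℬ U ≤ msImage ℬ U' := by
  apply Submodule.span_mono
  rintro x ⟨a, ha, u, hu, rfl⟩
  exact ⟨a, ha, u, h hu, rfl⟩

lemma map_le_msImage {B : V →ₗ[F] V'} (hB : B ∈ ℬ) (U : Submodule F V) :
    U.map B ≤ msImage ℬ U := by
  rintro x ⟨u, hu, rfl⟩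
  exact Submodule.subset_span ⟨B, hB, u, hu, rfl⟩

variable [FiniteDimensional F V] [FiniteDimensional F V']

lemma finrank_le_finrank_msImage_add_finrank_ker {B : V →ₗ[F] V'} (hB : B ∈ ℬ)
    (U : Submodule F V) :
    finrank F U ≤ finrank F (msImage ℬ U) + finrank F (LinearMap.ker B) := by
  rw [← finrank_map_add_finrank_ker_inf B U]
  exact add_le_add (Submodule.finrank_mono (map_le_msImage hB U))
    (Submodule.finrank_mono inf_le_left)

lemma IsSingularityWitness.finrank_range_le {A B : V →ₗ[F] V'} {U : Submodule F V}
    (hU : IsSingularityWitness ℬ (finrank F (LinearMap.ker A)) U) (hB : B ∈ ℬ) :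
    finrank F (LinearMap.range B) ≤ finrank F (LinearMap.range A) := by
  have hker := finrank_le_finrank_msImage_add_finrank_ker hB U
  have hA := LinearMap.finrank_range_add_finrank_ker A
  have hB := LinearMap.finrank_range_add_finrank_ker B
  unfold IsSingularityWitness at hU
  omega

lemma IsSingularityWitness.ker_le_and_msImage_eq_map {A : V →ₗ[F] V'} {U : Submodule F V}
    (hU : IsSingularityWitness ℬ (finrank F (LinearMap.ker A)) U) (hA : A ∈ ℬ) :
    LinearMap.ker A ≤ U ∧ msImage ℬ U = U.map A := by
  have hrn := finrank_map_add_finrank_ker_inf A U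
  have hmap := Submodule.finrank_mono (map_le_msImage hA U)
  have hker := Submodule.finrank_mono (inf_le_left : LinearMap.ker A ⊓ U ≤ LinearMap.ker A)
  unfold IsSingularityWitness at hU
  constructor
  · rw [← Submodule.eq_of_le_of_finrank_le (inf_le_left : LinearMap.ker A ⊓ U ≤ _) (by omega)]
    exact inf_le_right
  · exact (Submodule.eq_of_le_of_finrank_le (map_le_msImage hA U) (by omega)).symm

end msImage

section WongSequence

variable {ℬ : Submodule F (V →ₗ[F] V')} {A : V →ₗ[F] V'} {W : ℕ → Submodule F V'}

lemma wong_le_of_msImage_comap_le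
    (hW0 : W 0 = ⊥) (hWs : ∀ i, W (i + 1) = msImage ℬ ((W i).comap A))
    {X : Submodule F V'} (hX : msImage ℬ (X.comap A) ≤ X) (i : ℕ) : W i ≤ X := by
  induction i with
  | zero => simp [hW0]
  | succ i ih => exact (hWs i).trans_le ((msImage_mono (Submodule.comap_mono ih)).trans hX)

lemma monotone_wong (hW0 : W 0 = ⊥) (hWs : ∀ i, W (i + 1) = msImage ℬ ((W i).comap A)) :
    Monotone W := by
  refine monotone_nat_of_le_succ fun i => ?_
  induction i with
  | zero => simp [hW0]
  | succ i ih => rw [hWs i, hWs (i + 1)]; exact msImage_mono (Submodule.comap_mono ih)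

lemma msImage_comap_wong_limit
    (hW0 : W 0 = ⊥) (hWs : ∀ i, W (i + 1) = msImage ℬ ((W i).comap A))
    {N : ℕ} (hlim : ∀ i, W i ≤ W N) :
    msImage ℬ ((W N).comap A) = W N :=
  (hWs N) ▸ le_antisymm (hlim (N + 1)) (monotone_wong hW0 hWs N.le_succ)

lemma IsSingularityWitness.wong_le_range [FiniteDimensional F V] [FiniteDimensional F V']
    {U : Submodule F V} (hU : IsSingularityWitness ℬ (finrank F (LinearMap.ker A)) U)
    (hA : A ∈ ℬ) (hW0 : W 0 = ⊥) (hWs : ∀ i, W (i + 1) = msImage ℬ ((W i).comap A))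
    (i : ℕ) : W i ≤ LinearMap.range A := by
  obtain ⟨hker, hmap⟩ := hU.ker_le_and_msImage_eq_map hA
  refine (wong_le_of_msImage_comap_le hW0 hWs (X := U.map A) ?_ i).trans LinearMap.map_le_range
  rw [Submodule.comap_map_eq, sup_eq_left.mpr hker, hmap]

end WongSequence

theorem stmt8 [FiniteDimensional F V] [FiniteDimensional F V']
    (ℬ : Submodule F (V →ₗ[F] V')) (A : V →ₗ[F] V') (hA : A ∈ ℬ)
    -- second Wong sequence of (⟨A⟩, ℬ)
    (W : ℕ → Submodule F V')
    (hW0 : W 0 = ⊥)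
    (hWs : ∀ i, W (i + 1) = msImage ℬ ((W i).comap A))
    -- W N is the limit of the sequence
    (N : ℕ) (hlim : ∀ i, W i ≤ W N) :
    -- a corank(A)-singularity witness exists iff the limit lies in im(A)
    ((∃ U : Submodule F V,
        finrank F (msImage ℬ U) + finrank F (LinearMap.ker A) ≤ finrank F U) ↔
      W N ≤ LinearMap.range A) ∧
    -- in that case, A has maximum rank in ℬ and A⁻¹(W*) is a
    -- corank(ℬ)-singularity witness
    (W N ≤ LinearMap.range A →
      (∀ B ∈ ℬ, finrank F (LinearMap.range B) ≤ finrank F (LinearMap.range A)) ∧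
      finrank F (msImage ℬ ((W N).comap A)) + finrank F (LinearMap.ker A) ≤
        finrank F ((W N).comap A)) := by
  have limit_witness (h : W N ≤ LinearMap.range A) :
      IsSingularityWitness ℬ (finrank F (LinearMap.ker A)) ((W N).comap A) := by
    rw [IsSingularityWitness, msImage_comap_wong_limit hW0 hWs hlim,
      finrank_comap_eq_of_le_range h]
  refine ⟨⟨fun ⟨U, hU⟩ => IsSingularityWitness.wong_le_range hU hA hW0 hWs N,
    fun h => ⟨_, limit_witness h⟩⟩, fun h => ⟨fun B hB => ?_, limit_witness h⟩⟩
  exact (limit_witness h).finrank_range_le hB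
end

section
/- Assume |𝔽| > n and let A, B be linear maps V → V' with dim V = n. Then A is of maximum rank in the pencil ⟨A, B⟩ if and only if for all i ∈ [n], (BA')^i(ker(AA')) ⊆ im(A), where A' is any pseudo-inverse of A. -/
/-!
Put `P = A A'` and `M = B A'`. Since `A'` is onto, `a A + b B` and `a P + b M` have the same rank,
and `P` is a projection onto `im A` with kernel `K = ker (A A')`.

If `M^i K ⊆ im A` for `1 ≤ i ≤ n`, the increasing chain `∑_{i<j} M^i (M K)` must stabilise inside
`im A`, giving an `M`-invariant `U ⊆ im A` containing `M K`. Every `a P + b M` maps `K ⊕ U` into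
`U`, so its rank is at most `n - dim K = rank A`.

Conversely, let `m + 1` be the least exponent with `M^(m+1) k ∉ im A` for some `k ∈ K`. Then
`(P + t M) (∑_{j ≤ m} (-t)^j M^j k) = -(-t)^(m+1) M^(m+1) k` telescopes, so for `t ≠ 0` the range
of `P + t M` contains `M^(m+1) k` together with the images `w + t M w` of a basis of `im A`.
Modulo `M^(m+1) k` these images are independent unless `t` is a root of a polynomial of degree
`≤ rank A` that is nonzero at `0`; as `|𝔽| > n ≥ rank A + 1`, some `t ≠ 0` avoids all roots and
`rank (P + t M) > rank A`.
-/

open Submodule Module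

variable {F V V' : Type*} [Field F] [AddCommGroup V] [Module F V]
  [AddCommGroup V'] [Module F V']

open Polynomial in
theorem Matrix.exists_ne_zero_det_one_sub_smul_ne_zero {ι : Type*} [Fintype ι] [DecidableEq ι]
    (M : Matrix ι ι F) (hF : ((Fintype.card ι + 1 : ℕ) : Cardinal) < Cardinal.mk F) :
    ∃ t : F, t ≠ 0 ∧ (1 - t • M).det ≠ 0 := by
  have hrev0 : M.charpolyRev ≠ 0 := fun h => by simpa [h] using M.eval_charpolyRev
  have hdeg : (X * M.charpolyRev).natDegree < Cardinal.mk F := by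
    refine lt_of_le_of_lt (Nat.cast_le.mpr ?_) hF
    rw [natDegree_X_mul hrev0, ← M.reverse_charpoly, ← M.charpoly_natDegree_eq_dim]
    exact Nat.succ_le_succ (reverse_natDegree_le M.charpoly)
  obtain ⟨t, ht⟩ := exists_eval_ne_zero_of_natDegree_lt_card _ (mul_ne_zero X_ne_zero hrev0) hdeg
  have heval : M.charpolyRev.eval t = (1 - t • M).det := by
    rw [Matrix.charpolyRev, ← coe_evalRingHom, RingHom.map_det]
    congr 1
    ext i j
    by_cases hij : i = j <;> simp [hij, mul_comm t]
  rw [eval_mul, eval_X, heval] at ht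
  exact ⟨t, left_ne_zero_of_mul ht, right_ne_zero_of_mul ht⟩

variable {E : Type*} [AddCommGroup E] [Module F E]

theorem exists_linearIndependent_add_smul {ι : Type*} [Fintype ι] {a : ι → E} (b : ι → E)
    (ha : LinearIndependent F a) (hF : ((Fintype.card ι + 1 : ℕ) : Cardinal) < Cardinal.mk F) :
    ∃ t : F, t ≠ 0 ∧ LinearIndependent F (fun j => a j + t • b j) := by
  classical
  obtain ⟨φ, hφ⟩ := (Fintype.linearCombination F a).exists_leftInverse_of_injective
    (LinearMap.ker_eq_bot.mpr ha.fintypeLinearCombination_injective)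
  set C := LinearMap.toMatrix' (φ ∘ₗ Fintype.linearCombination F b)
  obtain ⟨t, ht0, hdet⟩ := (-C).exists_ne_zero_det_one_sub_smul_ne_zero hF
  rw [smul_neg, sub_neg_eq_add] at hdet
  refine ⟨t, ht0, Fintype.linearIndependent_iff.mpr fun c hc => ?_⟩
  have hmulVec : (1 + t • C).mulVec c = 0 := by
    have hφa : φ (Fintype.linearCombination F a c) = c := LinearMap.congr_fun hφ c
    have := congrArg φ hc
    simp only [smul_add, Finset.sum_add_distrib, smul_comm (c _) t, ← Finset.smul_sum,
      ← Fintype.linearCombination_apply, map_add, map_smul, hφa, map_zero] at this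
    rw [Matrix.add_mulVec, Matrix.one_mulVec, Matrix.smul_mulVec, LinearMap.toMatrix'_mulVec]
    exact this
  exact congrFun (Matrix.eq_zero_of_mulVec_eq_zero hdet hmulVec)

theorem exists_linearIndependent_option_add_smul {ι : Type*} [Fintype ι] {y : E} {a : ι → E}
    (b : ι → E) (ha : LinearIndependent F a) (hy : y ∉ span F (Set.range a))
    (hF : ((Fintype.card ι + 1 : ℕ) : Cardinal) < Cardinal.mk F) :
    ∃ t : F, t ≠ 0 ∧
      LinearIndependent F (fun o => Option.casesOn' o y fun j => a j + t • b j : Option ι → E) := by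
  set π := (span F {y}).mkQ
  have hπa : LinearIndependent F (π ∘ a) :=
    ha.map (by rw [ker_mkQ]; exact disjoint_span_singleton_of_notMem hy)
  obtain ⟨t, ht0, hli⟩ := exists_linearIndependent_add_smul (π ∘ b) hπa hF
  simp only [Function.comp_apply, ← map_smul, ← map_add] at hli
  refine ⟨t, ht0, (LinearIndependent.of_comp π hli).option fun hyu => hy ?_⟩
  have hdisj := Submodule.range_ker_disjoint (f := π) (v := fun j => a j + t • b j) hli
  rw [ker_mkQ, disjoint_span_singleton] at hdisj
  rw [hdisj hyu]
  exact zero_mem _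

theorem Module.End.add_smul_apply_sum_neg_pow_smul (P M : Module.End F E) (t : F) {k : E}
    (hk : P k = 0) (m : ℕ) (hfix : ∀ j, 0 < j → j ≤ m → P ((M ^ j) k) = (M ^ j) k) :
    (P + t • M) (∑ j ∈ Finset.range (m + 1), (-t) ^ j • (M ^ j) k) =
      -(-t) ^ (m + 1) • (M ^ (m + 1)) k := by
  induction m with
  | zero => simp [hk]
  | succ m ih =>
    rw [Finset.sum_range_succ, map_add, ih fun j hj hjm => hfix j hj (by omega), map_smul,
      LinearMap.add_apply, hfix (m + 1) m.succ_pos le_rfl, LinearMap.smul_apply,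
      ← Module.End.mul_apply, ← pow_succ' M (m + 1)]
    module

theorem exists_minimal_pow_apply_notMem (f : Module.End F E) {K W : Submodule F E} {i : ℕ}
    (hi : 0 < i) (h : ¬map (f ^ i) K ≤ W) :
    ∃ m, ∃ k ∈ K, (f ^ (m + 1)) k ∉ W ∧ ∀ j, 0 < j → j ≤ m → (f ^ j) k ∈ W := by
  classical
  have hex : ∃ m, ∃ k ∈ K, (f ^ (m + 1)) k ∉ W := by
    obtain ⟨_, ⟨k, hk, rfl⟩, hkW⟩ := SetLike.not_le_iff_exists.mp h
    exact ⟨i - 1, k, hk, by rwa [Nat.sub_add_cancel hi]⟩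
  obtain ⟨k, hk, hkW⟩ := Nat.find_spec hex
  refine ⟨Nat.find hex, k, hk, hkW, fun j hj hjm => ?_⟩
  obtain ⟨j, rfl⟩ : ∃ j', j = j' + 1 := ⟨j - 1, by omega⟩
  have := Nat.find_min hex (m := j) (by omega)
  push Not at this
  exact this k hk

theorem exists_lt_finrank_range_add_smul [FiniteDimensional F E] {P M : Module.End F E}
    (hP : IsIdempotentElem P) (hF : (finrank F E : Cardinal) < Cardinal.mk F) {i : ℕ}
    (hi : 0 < i) (h : ¬map (M ^ i) (LinearMap.ker P) ≤ LinearMap.range P) :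
    ∃ t : F, finrank F (LinearMap.range P) < finrank F (LinearMap.range (P + t • M)) := by
  obtain ⟨m, k, hk, hkW, hpow⟩ := exists_minimal_pow_apply_notMem M hi h
  have hfix : ∀ j, 0 < j → j ≤ m → P ((M ^ j) k) = (M ^ j) k := fun j hj hjm =>
    (LinearMap.IsIdempotentElem.mem_range_iff hP).mp (hpow j hj hjm)
  set y := (M ^ (m + 1)) k
  set W := LinearMap.range P
  let w : Fin (finrank F W) → E := W.subtype ∘ Module.finBasis F W
  have hw : LinearIndependent F w := (Module.finBasis F W).linearIndependent.map' _ W.ker_subtype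
  have hwW : ∀ j, w j ∈ W := fun j => (Module.finBasis F W j).2
  have hy : y ∉ span F (Set.range w) :=
    fun hy => hkW (span_le.mpr (Set.range_subset_iff.mpr hwW) hy)
  have hF' : ((Fintype.card (Fin (finrank F W)) + 1 : ℕ) : Cardinal) < Cardinal.mk F := by
    refine lt_of_le_of_lt (Nat.cast_le.mpr ?_) hF
    rw [Fintype.card_fin]
    exact Submodule.finrank_lt (fun hW => hkW (hW ▸ mem_top))
  obtain ⟨t, ht0, hli⟩ := exists_linearIndependent_option_add_smul (M ∘ w) hw hy hF'
  refine ⟨t, ?_⟩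
  have hmem : ∀ o, Option.casesOn' o y (fun j => w j + t • (M ∘ w) j) ∈
      LinearMap.range (P + t • M) := by
    rintro (_ | j)
    · have hc : -(-t) ^ (m + 1) ≠ 0 := by simp [ht0]
      refine ⟨(-(-t) ^ (m + 1))⁻¹ • ∑ j ∈ Finset.range (m + 1), (-t) ^ j • (M ^ j) k, ?_⟩
      rw [map_smul, Module.End.add_smul_apply_sum_neg_pow_smul P M t hk m hfix, inv_smul_smul₀ hc]
      rfl
    · refine ⟨w j, ?_⟩
      simp [(LinearMap.IsIdempotentElem.mem_range_iff hP).mp (hwW j)]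
  calc finrank F W < Fintype.card (Option (Fin (finrank F W))) := by simp
    _ = finrank F (span F (Set.range _)) := (finrank_span_eq_card hli).symm
    _ ≤ _ := Submodule.finrank_mono (span_le.mpr (Set.range_subset_iff.mpr hmem))

theorem exists_invariant_of_map_pow_le [FiniteDimensional F E] (f : Module.End F E)
    {p q : Submodule F E} (h : ∀ i ≤ finrank F q, map (f ^ i) p ≤ q) :
    ∃ U : Submodule F E, p ≤ U ∧ U ≤ q ∧ map f U ≤ U := by
  set S : ℕ → Submodule F E := fun j => ⨆ (i) (_ : i < j), map (f ^ i) p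
  have hS_le : ∀ j ≤ finrank F q + 1, S j ≤ q := fun j hj => iSup₂_le fun i hi => h i (by omega)
  have hS_mono : ∀ j, S j ≤ S (j + 1) := fun j => biSup_mono fun i hi => by omega
  have hp_le : ∀ j, p ≤ S (j + 1) := fun j => by
    have := le_iSup₂ (f := fun i (_ : i < j + 1) => map (f ^ i) p) 0 j.succ_pos
    rwa [pow_zero, Module.End.one_eq_id, map_id] at this
  have hmap_le : ∀ j, map f (S j) ≤ S (j + 1) := fun j => map_le_iff_le_comap.mpr <|
    iSup₂_le fun i hi => map_le_iff_le_comap.mp <| by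
      rw [← map_comp, ← Module.End.mul_eq_comp, ← pow_succ']
      exact le_iSup₂ (f := fun i (_ : i < j + 1) => map (f ^ i) p) (i + 1) (by omega)
  obtain ⟨j, hj, hstab⟩ : ∃ j ≤ finrank F q, S (j + 1) ≤ S j := by
    by_contra! hgrow
    have hdim : ∀ j ≤ finrank F q + 1, j ≤ finrank F (S j) := by
      intro j hj
      induction j with
      | zero => exact Nat.zero_le _
      | succ j ih =>
        have := Submodule.finrank_lt_finrank_of_lt
          ((hS_mono j).lt_of_not_ge (hgrow j (by omega)))
        have := ih (by omega)
        omega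
    have := (hdim _ le_rfl).trans (Submodule.finrank_mono (hS_le _ le_rfl))
    omega
  exact ⟨S j, (hp_le j).trans hstab, hS_le j (by omega), (hmap_le j).trans hstab⟩

theorem finrank_range_add_finrank_le_of_le_comap [FiniteDimensional F E] (L : Module.End F E)
    {K U : Submodule F E} (hKU : Disjoint K U) (hL : K ⊔ U ≤ comap L U) :
    finrank F (LinearMap.range L) + finrank F K ≤ finrank F E := by
  let L' : ↥(K ⊔ U) →ₗ[F] U := L.restrict hL
  have hker : map (K ⊔ U).subtype (LinearMap.ker L') ≤ LinearMap.ker L := by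
    rintro _ ⟨x, hx, rfl⟩
    simpa [L'] using congrArg Subtype.val (LinearMap.mem_ker.mp hx)
  have h₁ := LinearMap.finrank_range_add_finrank_ker L'
  have h₂ := LinearMap.finrank_range_add_finrank_ker L
  have h₃ := Submodule.finrank_sup_add_finrank_inf_eq K U
  have h₄ := (LinearMap.range L').finrank_le
  have h₅ := Submodule.finrank_mono hker
  rw [hKU.eq_bot, finrank_bot, Submodule.finrank_map_subtype_eq] at *
  omega

theorem finrank_range_smul_add_smul_le [FiniteDimensional F E] {P M : Module.End F E}
    (hP : IsIdempotentElem P)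
    (h : ∀ i, 1 ≤ i → i ≤ finrank F E → map (M ^ i) (LinearMap.ker P) ≤ LinearMap.range P)
    (a b : F) : finrank F (LinearMap.range (a • P + b • M)) ≤ finrank F (LinearMap.range P) := by
  rcases (Submodule.finrank_le (LinearMap.range P)).eq_or_lt with heq | hlt
  · exact heq ▸ LinearMap.finrank_range_le _
  obtain ⟨U, hKU, hUW, hMU⟩ := exists_invariant_of_map_pow_le M
    (p := map M (LinearMap.ker P)) (q := LinearMap.range P) fun i hi => by
      rw [← map_comp, ← Module.End.mul_eq_comp, ← pow_succ]
      exact h (i + 1) (by omega) (by omega)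
  have hfix : ∀ u ∈ U, P u = u := fun u hu =>
    (LinearMap.IsIdempotentElem.mem_range_iff hP).mp (hUW hu)
  have hmaps : LinearMap.ker P ⊔ U ≤ comap (a • P + b • M) U := by
    refine sup_le (fun k hk => ?_) (fun u hu => ?_)
    · simpa [LinearMap.mem_ker.mp hk] using U.smul_mem b (hKU (mem_map_of_mem hk))
    · simpa [hfix u hu] using U.add_mem (U.smul_mem a hu) (U.smul_mem b (hMU (mem_map_of_mem hu)))
  have := finrank_range_add_finrank_le_of_le_comap _
    ((LinearMap.IsIdempotentElem.isCompl hP).symm.disjoint.mono_right hUW) hmaps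
  have := LinearMap.finrank_range_add_finrank_ker P
  omega

theorem stmt12_general [FiniteDimensional F V']
    (n : ℕ) (hn' : finrank F V' = n)
    (hF : (n : Cardinal) < Cardinal.mk F)
    (A B : V →ₗ[F] V')
    -- A' is a pseudo-inverse of A
    (A' : V' →ₗ[F] V) (hbij : Function.Bijective A')
    (hpinv : ∀ w ∈ LinearMap.range A, A (A' w) = w) :
    (∀ C ∈ Submodule.span F ({A, B} : Set (V →ₗ[F] V')),
        finrank F (LinearMap.range C) ≤ finrank F (LinearMap.range A)) ↔
    (∀ i, 1 ≤ i → i ≤ n →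
        Submodule.map (((B ∘ₗ A' : Module.End F V')) ^ i)
          (LinearMap.ker (A ∘ₗ A')) ≤ LinearMap.range A) := by
  set P : End F V' := A ∘ₗ A'
  set M : End F V' := B ∘ₗ A'
  have hA' : LinearMap.range A' = ⊤ := LinearMap.range_eq_top.mpr hbij.2
  have hP : IsIdempotentElem P := LinearMap.ext fun v => hpinv _ ⟨A' v, rfl⟩
  have hPA : LinearMap.range P = LinearMap.range A := LinearMap.range_comp_of_range_eq_top A hA'
  have hrange : ∀ a b : F, LinearMap.range (a • A + b • B) = LinearMap.range (a • P + b • M) :=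
    fun a b => (LinearMap.range_comp_of_range_eq_top (a • A + b • B) hA').symm
  rw [← hPA, ← hn']
  constructor
  · intro hmax i hi hin
    by_contra hi'
    obtain ⟨t, ht⟩ := exists_lt_finrank_range_add_smul hP (hn' ▸ hF) hi hi'
    have := hmax (1 • A + t • B) (mem_span_pair.mpr ⟨1, t, rfl⟩)
    rw [hrange, one_smul] at this
    omega
  · rintro h _ hC
    obtain ⟨a, b, rfl⟩ := mem_span_pair.mp hC
    rw [hrange]
    exact finrank_range_smul_add_smul_le hP h a b

theorem stmt12 [FiniteDimensional F V] [FiniteDimensional F V']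
    (n : ℕ) (hn : finrank F V = n) (hn' : finrank F V' = n)
    (hF : (n : Cardinal) < Cardinal.mk F)
    (A B : V →ₗ[F] V')
    -- A' is a pseudo-inverse of A
    (A' : V' →ₗ[F] V) (hbij : Function.Bijective A')
    (hpinv : ∀ w ∈ LinearMap.range A, A (A' w) = w) :
    (∀ C ∈ Submodule.span F ({A, B} : Set (V →ₗ[F] V')),
        finrank F (LinearMap.range C) ≤ finrank F (LinearMap.range A)) ↔
    (∀ i, 1 ≤ i → i ≤ n →
        Submodule.map (((B ∘ₗ A' : Module.End F V')) ^ i)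
          (LinearMap.ker (A ∘ₗ A')) ≤ LinearMap.range A) :=
  stmt12_general n hn' hF A B A' hbij hpinv
end
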